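/- arXiv:2302.09607 — 2 statements merged into one kernel-verified Lean document; each statement's English description precedes it below -/
import Mathlib

section
/- Let a group H act on a set X with orbits X_i and X_j, and c : X → C an H-equivariant coloring where C is finite. If X_i and X_j share a color, then X_i and X_j have the same number of colors: |c(X_i)| = |c(X_j)|. -/
lemma image_orbit_eq {H X C : Type*} [Group H] [MulAction H X] [MulAction H C]
    (c : X → C) (hequiv : ∀ (h : H) (x : X), c (h • x) = h • c x) (x₀ : X) :
    c '' MulAction.orbit H x₀ = MulAction.orbit H (c x₀) := by
  ext a
  constructor
  · rintro ⟨x, ⟨h, rfl⟩, rfl⟩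
    exact ⟨h, (hequiv h x₀).symm⟩
  · rintro ⟨h, rfl⟩
    exact ⟨h • x₀, ⟨h, rfl⟩, hequiv h x₀⟩

/-- Lemma (share), counting form: two `H`-orbits sharing a color have the same
number of colors. -/
theorem orbits_sharing_color_have_same_number_of_colors
    {H X C : Type*} [Group H] [MulAction H X] [MulAction H C] [Fintype C]
    (c : X → C) (hequiv : ∀ (h : H) (x : X), c (h • x) = h • c x)
    (x₀ y₀ : X)
    (hshare : ∃ x ∈ MulAction.orbit H x₀, ∃ y ∈ MulAction.orbit H y₀, c x = c y) :
    (c '' MulAction.orbit H x₀).ncard = (c '' MulAction.orbit H y₀).ncard := by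
  obtain ⟨x, ⟨h, rfl⟩, y, ⟨g, rfl⟩, hxy⟩ := hshare
  rw [image_orbit_eq c hequiv, image_orbit_eq c hequiv]
  have h1 : c (h • x₀) ∈ MulAction.orbit H (c x₀) := ⟨h, (hequiv h x₀).symm⟩
  have h2 : c (g • y₀) ∈ MulAction.orbit H (c y₀) := ⟨g, (hequiv g y₀).symm⟩
  rw [← MulAction.orbit_eq_iff.2 h1, ← MulAction.orbit_eq_iff.2 h2, hxy]
end

section
/- Let a group H act on a set O which is the union of finitely many H-orbits X_1, …, X_n. Choose t_i ∈ X_i and let J ≤ H be a subgroup of finite index m containing stab_H(t_i) for every i. Then the collection {h·(J·t_1 ∪ ⋯ ∪ J·t_n) : h ∈ H} is a partition of O into m pairwise disjoint sets which is invariant under H (so H permutes the m classes). -/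
open Pointwise

/-- Lemma (norbits), converse direction: with representatives `t i` of the `n` distinct
`H`-orbits covering `O` and a subgroup `J` of finite index `m` containing all their
stabilizers, the translates `h • (J•t₁ ∪ ⋯ ∪ J•tₙ)` form an `H`-invariant partition
of `O` into `m` pairwise disjoint classes. -/
theorem partition_from_subgroup_several_orbits
    {H O : Type*} [Group H] [MulAction H O]
    (n : ℕ) (hn : 0 < n) (t : Fin n → O)
    (hcover : ∀ x : O, ∃ i, x ∈ MulAction.orbit H (t i))
    (hdistinct : ∀ i i' : Fin n, MulAction.orbit H (t i) = MulAction.orbit H (t i') → i = i')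
    (J : Subgroup H) (m : ℕ) (hm0 : 0 < m) (hm : J.index = m)
    (hstab : ∀ i, MulAction.stabilizer H (t i) ≤ J) :
    (⋃₀ {s : Set O | ∃ h : H, s = h • ⋃ i, (fun j : H => j • t i) '' (J : Set H)}
        = Set.univ) ∧
    Set.PairwiseDisjoint
      {s : Set O | ∃ h : H, s = h • ⋃ i, (fun j : H => j • t i) '' (J : Set H)} id ∧
    ({s : Set O | ∃ h : H, s = h • ⋃ i, (fun j : H => j • t i) '' (J : Set H)}).ncard = m ∧
    (∀ (h' : H) (s : Set O),
      s ∈ {s : Set O | ∃ h : H, s = h • ⋃ i, (fun j : H => j • t i) '' (J : Set H)} →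
      h' • s ∈ {s : Set O | ∃ h : H, s = h • ⋃ i, (fun j : H => j • t i) '' (J : Set H)}) := by
  set B : Set O := ⋃ i, (fun j : H => j • t i) '' (J : Set H) with hBdef
  have hmemB : ∀ x : O, x ∈ B ↔ ∃ i, ∃ j ∈ J, j • t i = x := by
    intro x
    simp [hBdef]
  -- J stabilizes B
  have hJB : ∀ k : H, k ∈ J → k • B = B := by
    intro k hk
    ext x
    constructor
    · rintro ⟨y, hy, rfl⟩
      rcases (hmemB y).1 hy with ⟨i, j, hj, rfl⟩
      refine (hmemB _).2 ⟨i, k * j, mul_mem hk hj, ?_⟩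
      show (k * j) • t i = k • j • t i
      rw [mul_smul]
    · intro hx
      rcases (hmemB x).1 hx with ⟨i, j, hj, rfl⟩
      refine ⟨(k⁻¹ * j) • t i, (hmemB _).2 ⟨i, k⁻¹ * j, mul_mem (inv_mem hk) hj, rfl⟩, ?_⟩
      show k • (k⁻¹ * j) • t i = j • t i
      rw [← mul_smul, ← mul_assoc, mul_inv_cancel, one_mul]
  -- intersecting translates come from the same coset
  have key : ∀ h h' : H, (h • B ∩ h' • B).Nonempty → h⁻¹ * h' ∈ J := by
    rintro h h' ⟨x, hx1, hx2⟩
    rw [Set.mem_smul_set_iff_inv_smul_mem] at hx1 hx2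
    rcases (hmemB _).1 hx1 with ⟨i, j, hj, hji⟩
    rcases (hmemB _).1 hx2 with ⟨i', j', hj', hji'⟩
    have hx : (h * j) • t i = (h' * j') • t i' := by
      rw [mul_smul, mul_smul, hji, hji', smul_inv_smul, smul_inv_smul]
    have hii : i = i' := by
      apply hdistinct
      apply MulAction.orbit_eq_iff.2
      refine ⟨(h * j)⁻¹ * (h' * j'), ?_⟩
      show ((h * j)⁻¹ * (h' * j')) • t i' = t i
      rw [mul_smul, ← hx, inv_smul_smul]
    subst hii
    have hst : (h' * j')⁻¹ * (h * j) ∈ MulAction.stabilizer H (t i) := by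
      rw [MulAction.mem_stabilizer_iff, mul_smul, hx, inv_smul_smul]
    have hJmem : (h' * j')⁻¹ * (h * j) ∈ J := hstab i hst
    have : j' * ((h' * j')⁻¹ * (h * j)) * j⁻¹ ∈ J := mul_mem (mul_mem hj' hJmem) (inv_mem hj)
    have heq : j' * ((h' * j')⁻¹ * (h * j)) * j⁻¹ = h'⁻¹ * h := by group
    rw [heq] at this
    simpa using inv_mem this
  -- same coset gives same translate
  have hsame : ∀ h h' : H, h⁻¹ * h' ∈ J → h • B = h' • B := by
    intro h h' hhh
    have : h • ((h⁻¹ * h') • B) = h' • B := by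
      rw [smul_smul, ← mul_assoc, mul_inv_cancel, one_mul]
    rw [hJB _ hhh] at this
    exact this
  have hBne : ∀ h : H, (h • B).Nonempty := by
    intro h
    exact ⟨h • t ⟨0, hn⟩, Set.smul_mem_smul_set ((hmemB _).2 ⟨⟨0, hn⟩, 1, one_mem J, one_smul _ _⟩)⟩
  refine ⟨?_, ?_, ?_, ?_⟩
  · ext x
    simp only [Set.mem_univ, iff_true, Set.mem_sUnion, Set.mem_setOf_eq]
    obtain ⟨i, g, rfl⟩ := hcover x
    exact ⟨g • B, ⟨g, rfl⟩, Set.smul_mem_smul_set ((hmemB _).2 ⟨i, 1, one_mem J, one_smul _ _⟩)⟩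
  · rintro s ⟨h, rfl⟩ s' ⟨h', rfl⟩ hne
    rw [Function.onFun, id, id, Set.disjoint_left]
    intro x hx hx'
    exact hne (hsame h h' (key h h' ⟨x, hx, hx'⟩))
  · let f : H ⧸ J → Set O := fun q => Quotient.liftOn' q (fun h => h • B)
      (fun a b hab => hsame a b ((QuotientGroup.leftRel_apply).1 hab))
    have hfinj : Function.Injective f := by
      intro q q'
      induction q using Quotient.inductionOn'
      induction q' using Quotient.inductionOn'
      rename_i a b
      intro hfe
      have hab : a • B = b • B := hfe
      have : a⁻¹ * b ∈ J := by
        apply key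
        obtain ⟨x, hx⟩ := hBne a
        exact ⟨x, hx, hab ▸ hx⟩
      exact Quotient.sound' ((QuotientGroup.leftRel_apply).2 this)
    have hrange : Set.range f = {s : Set O | ∃ h : H, s = h • B} := by
      ext s
      constructor
      · rintro ⟨q, rfl⟩
        induction q using Quotient.inductionOn'
        rename_i a
        exact ⟨a, rfl⟩
      · rintro ⟨h, rfl⟩
        exact ⟨Quotient.mk'' h, rfl⟩
    rw [← hrange, ← Nat.card_coe_set_eq, Nat.card_range_of_injective hfinj]
    rw [← hm]
    rfl
  · rintro h' s ⟨h, rfl⟩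
    exact ⟨h' * h, (mul_smul h' h B).symm⟩
end
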